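/- For elements A₁, A₂, A₃, A₄, A₅ in a Banach algebra and every positive integer n, ‖exp(Σⱼ₌₁⁵ Aⱼ) − ({exp(A₄/n) {exp(A₂/n) exp(A₁/n) exp(A₃/n)} exp(A₅/n)})^n‖ ≤ (1/(3n²)) · (Σⱼ₌₁⁵ ‖Aⱼ‖)³ · exp(Σⱼ₌₁⁵ ‖Aⱼ‖), where {XYZ} = (XYZ + ZYX)/2 and triple products are nested. -/

import Mathlib

noncomputable def jordanTriple {𝒜 : Type*} [NormedRing 𝒜] [NormedAlgebra ℝ 𝒜]
    (A B C : 𝒜) : 𝒜 := (1/2 : ℝ) • (A * B * C + C * B * A)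

/-! With `yᵢ = Aᵢ / n`, the nested triple product is the average of two symmetrized products
`(∏ exp yᵢ + ∏ exp yᵢ (reversed)) / 2`. Expanding `∏ exp yᵢ = 1 + L + Q + R` with `L = ∑ yᵢ`, the
quadratic terms `Q` of a product and of its reversal add up to `L ^ 2`, so each symmetrized product
agrees with `exp L` up to remainders of degree at least three, dominated by
`eˢ - 1 - s - s² / 2 ≤ s³ eˢ / 6` where `s = ∑ ‖yᵢ‖`. Telescoping `(exp L) ^ n - T ^ n` costs a
factor `n e^{(n - 1) s}`. All bounds are phrased through `‖x - 1‖ ≤ eᵃ - 1` rather than `‖x‖ ≤ eᵃ`, since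
`‖1‖` may exceed `1` in a normed ring. -/

open Finset NormedSpace
open scoped Nat

namespace Real

theorem exp_sub_sum_range_eq_tsum (t : ℝ) (k : ℕ) :
    exp t - ∑ m ∈ range k, t ^ m / m ! = ∑' i, t ^ (i + k) / (i + k)! := by
  rw [exp_eq_exp_ℝ, exp_eq_tsum_div]
  beta_reduce
  rw [← (summable_pow_div_factorial t).sum_add_tsum_nat_add k, add_sub_cancel_left]

theorem exp_sub_sum_range_le_of_le (k : ℕ) {s t : ℝ} (hs : 0 ≤ s) (hst : s ≤ t) :
    exp s - ∑ m ∈ range k, s ^ m / m ! ≤ exp t - ∑ m ∈ range k, t ^ m / m ! := by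
  simp only [exp_sub_sum_range_eq_tsum]
  refine Summable.tsum_le_tsum (fun i ↦ by gcongr) ?_ ?_ <;>
    exact (summable_nat_add_iff k).2 (summable_pow_div_factorial _)

theorem exp_sub_sum_range_le_pow_div_mul_exp (k : ℕ) {t : ℝ} (ht : 0 ≤ t) :
    exp t - ∑ m ∈ range k, t ^ m / m ! ≤ t ^ k / k ! * exp t := by
  have hterm (i : ℕ) : t ^ (i + k) / (i + k)! ≤ t ^ k / k ! * (t ^ i / i !) := by
    have hfac : (k ! * i ! : ℝ) ≤ (i + k)! := by
      rw [mul_comm]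
      exact_mod_cast Nat.le_of_dvd (Nat.factorial_pos _)
        (Nat.factorial_mul_factorial_dvd_factorial_add i k)
    rw [div_mul_div_comm, pow_add, mul_comm (t ^ i)]
    gcongr
  rw [exp_sub_sum_range_eq_tsum, exp_eq_exp_ℝ, exp_eq_tsum_div]
  beta_reduce
  rw [← tsum_mul_left]
  exact Summable.tsum_le_tsum hterm ((summable_nat_add_iff k).2 (summable_pow_div_factorial t))
    ((summable_pow_div_factorial t).mul_left _)

theorem exp_sub_one_sub_sub_sq_div_two_le {t : ℝ} (ht : 0 ≤ t) :
    exp t - 1 - t - t ^ 2 / 2 ≤ t ^ 3 / 6 * exp t := by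
  have h := exp_sub_sum_range_le_pow_div_mul_exp 3 ht
  norm_num [sum_range_succ] at h
  linarith

end Real

/-- `k ≠ 0` since `‖x ^ 0‖ = ‖1‖` may exceed `1`. -/
theorem norm_exp_sub_sum_range_le {𝒜 : Type*} [NormedRing 𝒜] [NormedAlgebra ℝ 𝒜]
    [CompleteSpace 𝒜] (x : 𝒜) {k : ℕ} (hk : k ≠ 0) :
    ‖exp x - ∑ m ∈ range k, (m ! : ℝ)⁻¹ • x ^ m‖ ≤
      Real.exp ‖x‖ - ∑ m ∈ range k, ‖x‖ ^ m / m ! := by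
  have hterm (i : ℕ) : ‖((i + k)! : ℝ)⁻¹ • x ^ (i + k)‖ ≤ ‖x‖ ^ (i + k) / (i + k)! := by
    rw [norm_smul, norm_inv, RCLike.norm_natCast, inv_mul_eq_div]
    gcongr
    exact norm_pow_le' x (by omega)
  have hsum := (summable_nat_add_iff k).2 (Real.summable_pow_div_factorial ‖x‖)
  rw [Real.exp_sub_sum_range_eq_tsum, exp_eq_tsum ℝ]
  beta_reduce
  rw [← (expSeries_summable' x).sum_add_tsum_nat_add k, add_sub_cancel_left]
  exact (norm_tsum_le_tsum_norm (hsum.of_nonneg_of_le (fun _ ↦ norm_nonneg _) hterm)).trans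
    (Summable.tsum_le_tsum hterm (hsum.of_nonneg_of_le (fun _ ↦ norm_nonneg _) hterm) hsum)

theorem norm_half_smul_add_sub_le {E : Type*} [SeminormedAddCommGroup E] [NormedSpace ℝ E]
    {x y z : E} {r : ℝ} (hx : ‖x - z‖ ≤ r) (hy : ‖y - z‖ ≤ r) : ‖(2 : ℝ)⁻¹ • (x + y) - z‖ ≤ r := by
  have := convex_closedBall z r (mem_closedBall_iff_norm.2 hx) (mem_closedBall_iff_norm.2 hy)
    (by norm_num : (0 : ℝ) ≤ 2⁻¹) (by norm_num : (0 : ℝ) ≤ 2⁻¹) (by norm_num)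
  rwa [← smul_add, mem_closedBall_iff_norm] at this

section SecondOrderExpansion

variable {𝒜 : Type*} [NormedRing 𝒜]

/-- `P = 1 + L + Q + R`, with `L`, `Q` and `R` dominated by the terms of degree one, two and at
least three of the series of `Real.exp a`. -/
structure IsSecondOrderExpansion (P L Q : 𝒜) (a : ℝ) : Prop where
  norm_linear_le : ‖L‖ ≤ a
  norm_quadratic_le : ‖Q‖ ≤ a ^ 2 / 2
  norm_remainder_le : ‖P - (1 + L + Q)‖ ≤ Real.exp a - 1 - a - a ^ 2 / 2

namespace IsSecondOrderExpansion

variable {P P' L L' Q Q' : 𝒜} {a b : ℝ}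

theorem norm_sub_one_sub_le (h : IsSecondOrderExpansion P L Q a) :
    ‖P - 1 - L‖ ≤ Real.exp a - 1 - a :=
  calc ‖P - 1 - L‖ = ‖Q + (P - (1 + L + Q))‖ := by congr 1; abel
    _ ≤ a ^ 2 / 2 + (Real.exp a - 1 - a - a ^ 2 / 2) :=
      norm_add_le_of_le h.norm_quadratic_le h.norm_remainder_le
    _ = Real.exp a - 1 - a := by ring

theorem norm_sub_one_le (h : IsSecondOrderExpansion P L Q a) : ‖P - 1‖ ≤ Real.exp a - 1 :=
  calc ‖P - 1‖ = ‖L + (P - 1 - L)‖ := by congr 1; abel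
    _ ≤ a + (Real.exp a - 1 - a) := norm_add_le_of_le h.norm_linear_le h.norm_sub_one_sub_le
    _ = Real.exp a - 1 := by ring

/-- The bounds are exactly the coefficients of `exp a * exp b = exp (a + b)`, so they multiply. -/
theorem mul (h : IsSecondOrderExpansion P L Q a) (h' : IsSecondOrderExpansion P' L' Q' b) :
    IsSecondOrderExpansion (P * P') (L + L') (Q + Q' + L * L') (a + b) where
  norm_linear_le := norm_add_le_of_le h.norm_linear_le h'.norm_linear_le
  norm_quadratic_le :=
    calc ‖Q + Q' + L * L'‖ ≤ a ^ 2 / 2 + b ^ 2 / 2 + a * b :=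
          norm_add₃_le.trans (by
            gcongr
            exacts [h.norm_quadratic_le, h'.norm_quadratic_le,
              norm_mul_le_of_le h.norm_linear_le h'.norm_linear_le])
      _ = (a + b) ^ 2 / 2 := by ring
  norm_remainder_le := by
    have ha : 0 ≤ a := (norm_nonneg _).trans h.norm_linear_le
    calc ‖P * P' - (1 + (L + L') + (Q + Q' + L * L'))‖
        = ‖(P - (1 + L + Q)) + (P' - (1 + L' + Q')) + (P - 1 - L) * (P' - 1)
            + L * (P' - 1 - L')‖ := by congr 1; noncomm_ring
      _ ≤ (Real.exp a - 1 - a - a ^ 2 / 2) + (Real.exp b - 1 - b - b ^ 2 / 2)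
            + (Real.exp a - 1 - a) * (Real.exp b - 1) + a * (Real.exp b - 1 - b) :=
        norm_add₄_le.trans (by
          gcongr
          exacts [h.norm_remainder_le, h'.norm_remainder_le,
            norm_mul_le_of_le h.norm_sub_one_sub_le h'.norm_sub_one_le,
            norm_mul_le_of_le h.norm_linear_le h'.norm_sub_one_sub_le])
      _ = Real.exp (a + b) - 1 - (a + b) - (a + b) ^ 2 / 2 := by rw [Real.exp_add]; ring

end IsSecondOrderExpansion

variable [NormedAlgebra ℝ 𝒜]

/-- The degree-two part `∑ yᵢ ^ 2 / 2 + ∑_{i<j} yᵢ yⱼ` of the expansion of `∏ exp yᵢ`. -/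
noncomputable def quadraticTerm : List 𝒜 → 𝒜
  | [] => 0
  | y :: l => (2 : ℝ)⁻¹ • (y * y) + quadraticTerm l + y * l.sum

theorem quadraticTerm_append (l m : List 𝒜) :
    quadraticTerm (l ++ m) = quadraticTerm l + quadraticTerm m + l.sum * m.sum := by
  induction l with
  | nil => simp [quadraticTerm]
  | cons y l ih =>
    simp only [List.cons_append, quadraticTerm, ih, List.sum_cons, List.sum_append]
    noncomm_ring

theorem quadraticTerm_add_quadraticTerm_reverse (l : List 𝒜) :
    quadraticTerm l + quadraticTerm l.reverse = l.sum * l.sum := by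
  induction l with
  | nil => simp [quadraticTerm]
  | cons y l ih =>
    have hsq : (y + l.sum) * (y + l.sum) = y * y + y * l.sum + l.sum * y + l.sum * l.sum := by
      noncomm_ring
    simp only [List.reverse_cons, quadraticTerm_append, quadraticTerm, List.sum_cons,
      List.sum_reverse, List.sum_nil, mul_zero, add_zero, hsq, ← ih]
    module

variable [CompleteSpace 𝒜]

theorem isSecondOrderExpansion_exp (y : 𝒜) {a : ℝ} (ha : ‖y‖ ≤ a) :
    IsSecondOrderExpansion (exp y) y ((2 : ℝ)⁻¹ • (y * y)) a where
  norm_linear_le := ha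
  norm_quadratic_le := by
    rw [norm_smul, norm_inv, Real.norm_ofNat, inv_mul_eq_div]
    gcongr
    exact norm_mul_le_of_le ha ha |>.trans_eq (sq a).symm
  norm_remainder_le := by
    have h := (norm_exp_sub_sum_range_le y three_ne_zero).trans
      (Real.exp_sub_sum_range_le_of_le 3 (norm_nonneg y) ha)
    simp only [sum_range_succ, sum_range_zero] at h
    norm_num at h
    rw [one_div, sq y] at h
    linarith

theorem isSecondOrderExpansion_prod_exp (l : List 𝒜) :
    IsSecondOrderExpansion (l.map exp).prod l.sum (quadraticTerm l) (l.map (‖·‖)).sum := by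
  induction l with
  | nil => exact ⟨by simp, by simp [quadraticTerm], by simp [quadraticTerm]⟩
  | cons y l ih => simpa [quadraticTerm] using (isSecondOrderExpansion_exp y le_rfl).mul ih

noncomputable def symmetrizedProdExp (l : List 𝒜) : 𝒜 :=
  (2 : ℝ)⁻¹ • ((l.map exp).prod + (l.reverse.map exp).prod)

theorem isSecondOrderExpansion_prod_exp_reverse (l : List 𝒜) :
    IsSecondOrderExpansion (l.reverse.map exp).prod l.sum (quadraticTerm l.reverse)
      (l.map (‖·‖)).sum := by
  simpa using isSecondOrderExpansion_prod_exp l.reverse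

theorem norm_symmetrizedProdExp_sub_one_le (l : List 𝒜) :
    ‖symmetrizedProdExp l - 1‖ ≤ Real.exp (l.map (‖·‖)).sum - 1 :=
  norm_half_smul_add_sub_le (isSecondOrderExpansion_prod_exp l).norm_sub_one_le
    (isSecondOrderExpansion_prod_exp_reverse l).norm_sub_one_le

theorem norm_exp_sum_sub_symmetrizedProdExp_le (l : List 𝒜) :
    ‖exp l.sum - symmetrizedProdExp l‖ ≤
      2 * (Real.exp (l.map (‖·‖)).sum - 1 - (l.map (‖·‖)).sum - (l.map (‖·‖)).sum ^ 2 / 2) := by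
  set s := (l.map (‖·‖)).sum
  have hE := (isSecondOrderExpansion_exp l.sum
    (List.le_sum_of_subadditive _ norm_zero.le norm_add_le l)).norm_remainder_le
  have hP := (isSecondOrderExpansion_prod_exp l).norm_remainder_le
  have hR := (isSecondOrderExpansion_prod_exp_reverse l).norm_remainder_le
  calc ‖exp l.sum - symmetrizedProdExp l‖
      = ‖(exp l.sum - (1 + l.sum + (2 : ℝ)⁻¹ • (l.sum * l.sum)))
          - (2 : ℝ)⁻¹ • ((l.map exp).prod - (1 + l.sum + quadraticTerm l))
          - (2 : ℝ)⁻¹ • ((l.reverse.map exp).prod - (1 + l.sum + quadraticTerm l.reverse))‖ := by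
        rw [symmetrizedProdExp, ← quadraticTerm_add_quadraticTerm_reverse]
        congr 1
        module
    _ ≤ (Real.exp s - 1 - s - s ^ 2 / 2) + 2⁻¹ * (Real.exp s - 1 - s - s ^ 2 / 2)
          + 2⁻¹ * (Real.exp s - 1 - s - s ^ 2 / 2) := by
        refine (norm_sub_le _ _).trans (add_le_add ((norm_sub_le _ _).trans (add_le_add hE ?_)) ?_)
        all_goals rw [norm_smul, norm_inv, Real.norm_ofNat]; gcongr
    _ = 2 * (Real.exp s - 1 - s - s ^ 2 / 2) := by ring

end SecondOrderExpansion

section PowerEstimates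

variable {𝒜 : Type*} [NormedRing 𝒜] {x y : 𝒜} {a b c : ℝ}

theorem norm_mul_le_of_norm_sub_one_le (hx : ‖x - 1‖ ≤ c - 1) (z : 𝒜) : ‖x * z‖ ≤ c * ‖z‖ :=
  calc ‖x * z‖ = ‖z + (x - 1) * z‖ := by congr 1; noncomm_ring
    _ ≤ ‖z‖ + (c - 1) * ‖z‖ := norm_add_le_of_le le_rfl (norm_mul_le_of_le hx le_rfl)
    _ = c * ‖z‖ := by ring

theorem norm_mul_le_of_norm_sub_one_le' (hx : ‖x - 1‖ ≤ c - 1) (z : 𝒜) : ‖z * x‖ ≤ ‖z‖ * c :=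
  calc ‖z * x‖ = ‖z + z * (x - 1)‖ := by congr 1; noncomm_ring
    _ ≤ ‖z‖ + ‖z‖ * (c - 1) := norm_add_le_of_le le_rfl (norm_mul_le_of_le le_rfl hx)
    _ = ‖z‖ * c := by ring

theorem norm_mul_sub_one_le (hx : ‖x - 1‖ ≤ Real.exp a - 1) (hy : ‖y - 1‖ ≤ Real.exp b - 1) :
    ‖x * y - 1‖ ≤ Real.exp (a + b) - 1 :=
  calc ‖x * y - 1‖ = ‖(x - 1) * y + (y - 1)‖ := by congr 1; noncomm_ring
    _ ≤ (Real.exp a - 1) * Real.exp b + (Real.exp b - 1) :=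
      norm_add_le_of_le ((norm_mul_le_of_norm_sub_one_le' hy _).trans
(by gcongr)) hy
    _ = Real.exp (a + b) - 1 := by rw [Real.exp_add]; ring

theorem norm_pow_sub_one_le (hx : ‖x - 1‖ ≤ Real.exp a - 1) (n : ℕ) :
    ‖x ^ n - 1‖ ≤ Real.exp (n * a) - 1 := by
  induction n with
  | zero => simp
  | succ n ih =>
    rw [pow_succ, Nat.cast_succ, add_one_mul]
    exact norm_mul_sub_one_le ih hx

theorem norm_pow_sub_pow_le (hx : ‖x - 1‖ ≤ Real.exp a - 1) (hy : ‖y - 1‖ ≤ Real.exp a - 1)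
    (n : ℕ) : ‖x ^ n - y ^ n‖ ≤ n * Real.exp ((n - 1) * a) * ‖x - y‖ := by
  induction n with
  | zero => simp
  | succ n ih =>
    calc ‖x ^ (n + 1) - y ^ (n + 1)‖ = ‖x ^ n * (x - y) + (x ^ n - y ^ n) * y‖ := by
          congr 1; rw [pow_succ, pow_succ]; noncomm_ring
      _ ≤ Real.exp (n * a) * ‖x - y‖ + n * Real.exp ((n - 1) * a) * ‖x - y‖ * Real.exp a :=
        norm_add_le_of_le (norm_mul_le_of_norm_sub_one_le (norm_pow_sub_one_le hx n) _)
          ((norm_mul_le_of_norm_sub_one_le' hy _).trans (by gcongr))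
      _ = ((n + 1 : ℕ) : ℝ) * Real.exp ((((n + 1 : ℕ) : ℝ) - 1) * a) * ‖x - y‖ := by
        have hexp : Real.exp (n * a) = Real.exp ((n - 1) * a) * Real.exp a := by
          rw [← Real.exp_add]; ring_nf
        push_cast
        rw [add_sub_cancel_right, hexp]
        ring

end PowerEstimates

theorem exp_eq_exp_inv_smul_pow {𝒜 : Type*} [NormedRing 𝒜] [NormedAlgebra ℝ 𝒜] [CompleteSpace 𝒜]
    (x : 𝒜) {n : ℕ} (hn : n ≠ 0) : exp x = exp ((n : ℝ)⁻¹ • x) ^ n := by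
  let _ : NormedAlgebra ℚ 𝒜 := .restrictScalars ℚ ℝ 𝒜
  rw [← exp_nsmul, ← Nat.cast_smul_eq_nsmul ℝ, smul_smul, mul_inv_cancel₀ (Nat.cast_ne_zero.2 hn),
    one_smul]

section JordanTriple

variable {𝒜 : Type*} [NormedRing 𝒜] [NormedAlgebra ℝ 𝒜]

theorem jordanTriple_exp_jordanTriple_exp (y₁ y₂ y₃ y₄ y₅ : 𝒜) :
    jordanTriple (exp y₄) (jordanTriple (exp y₂) (exp y₁) (exp y₃)) (exp y₅) =
      (2 : ℝ)⁻¹ • (symmetrizedProdExp [y₄, y₂, y₁, y₃, y₅] +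
        symmetrizedProdExp [y₄, y₃, y₁, y₂, y₅]) := by
  simp only [jordanTriple, symmetrizedProdExp, List.reverse_cons, List.reverse_nil,
    List.nil_append, List.cons_append, List.map_cons, List.map_nil, List.prod_cons,
    List.prod_nil, mul_one, mul_add, add_mul, smul_mul_assoc, mul_smul_comm, mul_assoc]
  module

variable [CompleteSpace 𝒜] (y₁ y₂ y₃ y₄ y₅ : 𝒜)

theorem norm_jordanTriple_exp_sub_one_le :
    ‖jordanTriple (exp y₄) (jordanTriple (exp y₂) (exp y₁) (exp y₃)) (exp y₅) - 1‖ ≤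
      Real.exp (‖y₁‖ + ‖y₂‖ + ‖y₃‖ + ‖y₄‖ + ‖y₅‖) - 1 := by
  set s := ‖y₁‖ + ‖y₂‖ + ‖y₃‖ + ‖y₄‖ + ‖y₅‖
  have key (l : List 𝒜) (hl : (l.map (‖·‖)).sum = s) :
      ‖symmetrizedProdExp l - 1‖ ≤ Real.exp s - 1 := by
    simpa only [hl] using norm_symmetrizedProdExp_sub_one_le l
  rw [jordanTriple_exp_jordanTriple_exp]
  refine norm_half_smul_add_sub_le (key _ ?_) (key _ ?_) <;>
    simp only [s, List.map_cons, List.map_nil, List.sum_cons, List.sum_nil] <;> abel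

theorem norm_exp_sub_jordanTriple_exp_le :
    ‖exp (y₁ + y₂ + y₃ + y₄ + y₅) -
        jordanTriple (exp y₄) (jordanTriple (exp y₂) (exp y₁) (exp y₃)) (exp y₅)‖ ≤
      (‖y₁‖ + ‖y₂‖ + ‖y₃‖ + ‖y₄‖ + ‖y₅‖) ^ 3 / 3 * Real.exp (‖y₁‖ + ‖y₂‖ + ‖y₃‖ + ‖y₄‖ + ‖y₅‖) := by
  set s := ‖y₁‖ + ‖y₂‖ + ‖y₃‖ + ‖y₄‖ + ‖y₅‖
  have key (l : List 𝒜) (hl : l.sum = y₁ + y₂ + y₃ + y₄ + y₅) (hl' : (l.map (‖·‖)).sum = s) :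
      ‖symmetrizedProdExp l - exp (y₁ + y₂ + y₃ + y₄ + y₅)‖ ≤
        2 * (Real.exp s - 1 - s - s ^ 2 / 2) := by
    simpa only [norm_sub_rev, hl, hl'] using norm_exp_sum_sub_symmetrizedProdExp_le l
  have hρ := Real.exp_sub_one_sub_sub_sq_div_two_le (by positivity : 0 ≤ s)
  rw [jordanTriple_exp_jordanTriple_exp, norm_sub_rev]
  refine (norm_half_smul_add_sub_le (key _ ?_ ?_) (key _ ?_ ?_)).trans (by linarith) <;>
    simp only [s, List.map_cons, List.map_nil, List.sum_cons, List.sum_nil] <;> abel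

end JordanTriple

theorem nested_triple_trotter_error {𝒜 : Type*} [NormedRing 𝒜] [NormedAlgebra ℝ 𝒜]
    [CompleteSpace 𝒜] (A₁ A₂ A₃ A₄ A₅ : 𝒜) (n : ℕ) (hn : 1 ≤ n) :
    ‖NormedSpace.exp (A₁ + A₂ + A₃ + A₄ + A₅) -
        (jordanTriple (NormedSpace.exp ((n : ℝ)⁻¹ • A₄))
          (jordanTriple (NormedSpace.exp ((n : ℝ)⁻¹ • A₂)) (NormedSpace.exp ((n : ℝ)⁻¹ • A₁))
            (NormedSpace.exp ((n : ℝ)⁻¹ • A₃)))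
          (NormedSpace.exp ((n : ℝ)⁻¹ • A₅))) ^ n‖ ≤
      1 / (3 * (n : ℝ) ^ 2) * (‖A₁‖ + ‖A₂‖ + ‖A₃‖ + ‖A₄‖ + ‖A₅‖) ^ 3 *
        Real.exp (‖A₁‖ + ‖A₂‖ + ‖A₃‖ + ‖A₄‖ + ‖A₅‖) := by
  set t : ℝ := (n : ℝ)⁻¹
  set N := ‖A₁‖ + ‖A₂‖ + ‖A₃‖ + ‖A₄‖ + ‖A₅‖
  have ht : 0 ≤ t := by positivity
  have hnt : (n : ℝ) * t = 1 := mul_inv_cancel₀ (Nat.cast_ne_zero.2 (by omega))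
  have hsum : t • A₁ + t • A₂ + t • A₃ + t • A₄ + t • A₅ = t • (A₁ + A₂ + A₃ + A₄ + A₅) := by
    simp only [smul_add]
  have hnorm : ‖t • A₁‖ + ‖t • A₂‖ + ‖t • A₃‖ + ‖t • A₄‖ + ‖t • A₅‖ = t * N := by
    simp only [norm_smul, Real.norm_of_nonneg ht, N]; ring
  have hE : ‖exp (t • (A₁ + A₂ + A₃ + A₄ + A₅)) - 1‖ ≤ Real.exp (t * N) - 1 := by
    refine (isSecondOrderExpansion_exp _ ?_).norm_sub_one_le
    rw [← hsum, ← hnorm]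
    exact (norm_add_le _ _).trans (add_le_add_left norm_add₄_le _)
  have hT := norm_jordanTriple_exp_sub_one_le (t • A₁) (t • A₂) (t • A₃) (t • A₄) (t • A₅)
  have hd := norm_exp_sub_jordanTriple_exp_le (t • A₁) (t • A₂) (t • A₃) (t • A₄) (t • A₅)
  rw [hnorm] at hT hd
  rw [hsum] at hd
  rw [exp_eq_exp_inv_smul_pow _ (by omega : n ≠ 0)]
  calc _ ≤ n * Real.exp ((n - 1) * (t * N)) * ((t * N) ^ 3 / 3 * Real.exp (t * N)) :=
        (norm_pow_sub_pow_le hE hT n).trans (by gcongr)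
    _ = (n * t) ^ 3 / (3 * n ^ 2) * N ^ 3 * Real.exp ((n - 1) * (t * N) + t * N) := by
        rw [Real.exp_add]; field_simp
    _ = 1 / (3 * (n : ℝ) ^ 2) * N ^ 3 * Real.exp N := by
        rw [hnt, show (n - 1) * (t * N) + t * N = N by linear_combination N * hnt]
        ring
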